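/- Let k, ℓ be integers, ν a non-negative integer, and f, g : ℍ → ℂ smooth. For every γ ∈ SL₂(ℝ), the ν-th Rankin-Cohen bracket commutes with the slash action: [(f|_k γ), (g|_ℓ γ)]_ν = ([f,g]_ν)|_{k+ℓ+2ν} γ. -/

import Mathlib

open Complex Finset
open scoped Real

/-- Generalized binomial coefficient `C(x, m) = x(x-1)⋯(x-m+1)/m!`. -/
noncomputable def gchoose (x : ℂ) (m : ℕ) : ℂ :=
  (∏ i ∈ Finset.range m, (x - i)) / (Nat.factorial m)

/-- Wirtinger derivative `∂/∂τ`. -/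
noncomputable def wderiv (f : ℂ → ℂ) (τ : ℂ) : ℂ :=
  (fderiv ℝ f τ 1 - Complex.I * fderiv ℝ f τ Complex.I) / 2

/-- Wirtinger derivative `∂/∂τ̄`. -/
noncomputable def wderivBar (f : ℂ → ℂ) (τ : ℂ) : ℂ :=
  (fderiv ℝ f τ 1 + Complex.I * fderiv ℝ f τ Complex.I) / 2

/-- Iterated Wirtinger derivative `∂^n/∂τ^n`. -/
noncomputable def wderivN : ℕ → (ℂ → ℂ) → (ℂ → ℂ)
  | 0, f => f
  | n + 1, f => wderiv (wderivN n f)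

/-- The ν-th Rankin-Cohen bracket of `f` (weight `k`) and `g` (weight `ℓ`). -/
noncomputable def RC (k l : ℂ) (ν : ℕ) (f g : ℂ → ℂ) (τ : ℂ) : ℂ :=
  (2 * (π : ℂ) * Complex.I)⁻¹ ^ ν *
    ∑ μ ∈ Finset.range (ν + 1), (-1 : ℂ) ^ μ * gchoose (k + ν - 1) (ν - μ) *
      gchoose (l + ν - 1) μ * wderivN μ f τ * wderivN (ν - μ) g τ

/-- The weight `k` slash operator `(f|_k γ)(τ) = (cτ+d)^{-k} f((aτ+b)/(cτ+d))`. -/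
noncomputable def slash (k : ℤ) (γ : Matrix.SpecialLinearGroup (Fin 2) ℝ) (f : ℂ → ℂ)
    (τ : ℂ) : ℂ :=
  ((γ.1 1 0 : ℝ) * τ + (γ.1 1 1 : ℝ)) ^ (-k) *
    f (((γ.1 0 0 : ℝ) * τ + (γ.1 0 1 : ℝ)) / ((γ.1 1 0 : ℝ) * τ + (γ.1 1 1 : ℝ)))


section Aux

noncomputable def rpoch (x : ℂ) (n : ℕ) : ℂ := ∏ i ∈ Finset.range n, (x + i)

lemma gchoose_zero (x : ℂ) : gchoose x 0 = 1 := by simp [gchoose]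

lemma prod_desc_eq_rpoch (x : ℂ) (n : ℕ) :
    (∏ i ∈ Finset.range n, (x - i)) = rpoch (x - n + 1) n := by
  rw [← Finset.prod_range_reflect (fun i => x - i) n]
  refine Finset.prod_congr rfl fun j hj => ?_
  have hj' : j < n := Finset.mem_range.mp hj
  have : ((n - 1 - j : ℕ) : ℂ) = (n : ℂ) - 1 - j := by
    have h1 : j ≤ n - 1 := Nat.le_sub_one_of_lt hj'
    have h2 : 1 ≤ n := Nat.one_le_of_lt (Nat.lt_of_le_of_lt (Nat.zero_le j) hj')
    push_cast [Nat.cast_sub h1, Nat.cast_sub h2]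
    ring
  rw [this]; ring

lemma gchoose_eq_rpoch (x : ℂ) (n : ℕ) :
    gchoose x n = rpoch (x - n + 1) n / (Nat.factorial n) := by
  rw [gchoose, prod_desc_eq_rpoch]

lemma rpoch_add (x : ℂ) (m n : ℕ) :
    rpoch x (m + n) = rpoch x m * rpoch (x + m) n := by
  rw [rpoch, Finset.prod_range_add]
  congr 1
  refine Finset.prod_congr rfl fun i _ => ?_
  push_cast; ring

lemma gchoose_succ (x : ℂ) (m : ℕ) :
    ((m : ℂ) + 1) * gchoose x (m + 1) = (x - m) * gchoose x m := by
  have hm : ((Nat.factorial m : ℂ)) ≠ 0 := Nat.cast_ne_zero.mpr (Nat.factorial_ne_zero m)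
  have hm1 : ((m : ℂ) + 1) ≠ 0 := by
    have := Nat.cast_ne_zero (R := ℂ).mpr (Nat.succ_ne_zero m)
    push_cast at this; exact this
  rw [gchoose, gchoose, Finset.prod_range_succ, Nat.factorial_succ]
  push_cast
  field_simp

lemma gchoose_pascal (x : ℂ) (m : ℕ) :
    gchoose (x + 1) (m + 1) = gchoose x (m + 1) + gchoose x m := by
  have hm : ((Nat.factorial m : ℂ)) ≠ 0 := Nat.cast_ne_zero.mpr (Nat.factorial_ne_zero m)
  have hm1 : ((m : ℂ) + 1) ≠ 0 := by
    have := Nat.cast_ne_zero (R := ℂ).mpr (Nat.succ_ne_zero m)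
    push_cast at this; exact this
  have h1 : (∏ i ∈ Finset.range (m+1), (x + 1 - i)) = (x+1) * ∏ i ∈ Finset.range m, (x - i) := by
    rw [Finset.prod_range_succ' (fun i => x + 1 - (i:ℂ)) m]
    simp only [Nat.cast_zero, sub_zero]
    rw [mul_comm]
    congr 1
    refine Finset.prod_congr rfl fun i _ => ?_
    push_cast; ring
  rw [gchoose, gchoose, gchoose, h1, Finset.prod_range_succ, Nat.factorial_succ]
  push_cast
  field_simp
  ring

lemma gchoose_succ' (y : ℂ) (m : ℕ) :
    ((m : ℂ) + 1) * gchoose y (m + 1) = y * gchoose (y - 1) m := by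
  have hm : ((Nat.factorial m : ℂ)) ≠ 0 := Nat.cast_ne_zero.mpr (Nat.factorial_ne_zero m)
  have hm1 : ((m : ℂ) + 1) ≠ 0 := by
    have := Nat.cast_ne_zero (R := ℂ).mpr (Nat.succ_ne_zero m)
    push_cast at this; exact this
  have h1 : (∏ i ∈ Finset.range (m+1), (y - i)) = y * ∏ i ∈ Finset.range m, (y - 1 - i) := by
    rw [Finset.prod_range_succ' (fun i => y - (i:ℂ)) m]
    simp only [Nat.cast_zero, sub_zero]
    rw [mul_comm]
    congr 1
    refine Finset.prod_congr rfl fun i _ => ?_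
    push_cast; ring
  rw [gchoose, gchoose, h1, Nat.factorial_succ]
  push_cast
  field_simp

lemma rec_core (y p : ℂ) (m : ℕ) :
    (p + m + 1) * gchoose (y + 1) (m + 1) = (y + p + 1) * gchoose y m + p * gchoose y (m + 1) := by
  rw [gchoose_pascal]
  linear_combination gchoose_succ y m

noncomputable def Acoef (x : ℂ) (r s : ℕ) : ℂ :=
  (-1 : ℂ)^(r-s) * (r.descFactorial (r-s) : ℂ) * gchoose (x + r - 1) (r - s)

lemma A_rec_top (x : ℂ) (r : ℕ) : Acoef x (r+1) (r+1) = Acoef x r r := by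
  simp [Acoef, Nat.sub_self, gchoose_zero]

lemma A_rec_zero (x : ℂ) (r : ℕ) : Acoef x (r+1) 0 = -(x + r) * Acoef x r 0 := by
  have key := gchoose_succ' (x + r) r
  simp only [Acoef, Nat.sub_zero, Nat.succ_descFactorial_succ]
  push_cast
  have e1 : x + ((r:ℂ) + 1) - 1 = x + r := by ring
  rw [e1]
  have e2 : x + (r:ℂ) - 1 = (x + r) - 1 := by ring
  rw [e2]
  linear_combination ((-1:ℂ)^(r+1) * (r.descFactorial r : ℂ)) * key
    + gchoose (x+r) (r+1) * ((r:ℂ)+1) * (r.descFactorial r : ℂ) * (pow_succ (-1:ℂ) r)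

lemma A_rec_mid (x : ℂ) (s m : ℕ) :
    Acoef x (s+1+m+1) (s+1)
      = -(x + ((s+1+m : ℕ) : ℂ) + ((s+1 : ℕ) : ℂ)) * Acoef x (s+1+m) (s+1) + Acoef x (s+1+m) s := by
  have key := rec_core (x + s + m) ((s:ℂ) + 1) m
  simp only [Acoef]
  have d1 : s + 1 + m + 1 - (s + 1) = m + 1 := by omega
  have d2 : s + 1 + m - (s + 1) = m := by omega
  have d3 : s + 1 + m - s = m + 1 := by omega
  rw [d1, d2, d3]
  have e1 : x + ((s+1+m+1 : ℕ) : ℂ) - 1 = (x + s + m) + 1 := by push_cast; ring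
  have e2 : x + ((s+1+m : ℕ) : ℂ) - 1 = (x + s + m) := by push_cast; ring
  rw [e1, e2]
  have f1 : ((s+1+m+1).descFactorial (m+1) : ℂ) = ((s:ℂ)+m+2) * ((s+1+m).descFactorial m : ℂ) := by
    rw [show s+1+m+1 = (s+1+m)+1 by omega, Nat.succ_descFactorial_succ]
    push_cast; ring
  have f3 : ((s+1+m).descFactorial (m+1) : ℂ) = ((s:ℂ)+1) * ((s+1+m).descFactorial m : ℂ) := by
    rw [Nat.descFactorial_succ, show s+1+m-m = s+1 by omega]
    push_cast; ring
  rw [f1, f3]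
  push_cast
  linear_combination ((-1:ℂ)^(m+1) * ((s+1+m).descFactorial m : ℂ)) * key
    + (pow_succ (-1:ℂ) m) * (((s+1+m).descFactorial m : ℂ) * (x + 2*s + m + 2) * gchoose (x+s+m) m)

lemma wderiv_congr_nhds {f g : ℂ → ℂ} {τ : ℂ} (h : f =ᶠ[nhds τ] g) :
    wderiv f τ = wderiv g τ := by
  unfold wderiv; rw [h.fderiv_eq]

lemma contDiff_wderiv {f : ℂ → ℂ} (hf : ContDiff ℝ (⊤ : ℕ∞) f) : ContDiff ℝ (⊤ : ℕ∞) (wderiv f) := by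
  have h1 : ContDiff ℝ (⊤ : ℕ∞) (fderiv ℝ f) := hf.fderiv_right (by simp)
  have h2 : ContDiff ℝ (⊤ : ℕ∞) (fun τ => fderiv ℝ f τ 1) := h1.clm_apply contDiff_const
  have h3 : ContDiff ℝ (⊤ : ℕ∞) (fun τ => fderiv ℝ f τ Complex.I) := h1.clm_apply contDiff_const
  exact ((h2.sub (contDiff_const.mul h3)).div_const 2)

lemma contDiff_wderivN {f : ℂ → ℂ} (hf : ContDiff ℝ (⊤ : ℕ∞) f) (n : ℕ) :
    ContDiff ℝ (⊤ : ℕ∞) (wderivN n f) := by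
  induction n with
  | zero => exact hf
  | succ n ih => exact contDiff_wderiv ih

lemma wderiv_of_hasDerivAt {h : ℂ → ℂ} {h' τ : ℂ} (hh : HasDerivAt h h' τ) :
    wderiv h τ = h' := by
  have hf : HasFDerivAt h ((ContinuousLinearMap.smulRight (1 : ℂ →L[ℂ] ℂ) h').restrictScalars ℝ) τ :=
    (hh.hasFDerivAt).restrictScalars ℝ
  unfold wderiv
  rw [hf.fderiv]
  simp [ContinuousLinearMap.smulRight_apply, smul_eq_mul]
  ring_nf
  simp [Complex.I_sq]
  ring

lemma wderiv_comp_holo {h : ℂ → ℂ} {h' τ : ℂ} (hh : HasDerivAt h h' τ)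
    {F : ℂ → ℂ} (hF : DifferentiableAt ℝ F (h τ)) :
    wderiv (fun z => F (h z)) τ = wderiv F (h τ) * h' := by
  have hfd : HasFDerivAt h ((ContinuousLinearMap.smulRight (1 : ℂ →L[ℂ] ℂ) h').restrictScalars ℝ) τ :=
    (hh.hasFDerivAt).restrictScalars ℝ
  have hcomp : HasFDerivAt (fun z => F (h z))
      ((fderiv ℝ F (h τ)).comp ((ContinuousLinearMap.smulRight (1 : ℂ →L[ℂ] ℂ) h').restrictScalars ℝ)) τ :=
    (hF.hasFDerivAt).comp τ hfd
  set L := fderiv ℝ F (h τ) with hL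
  have key : ∀ v : ℂ, L v = v.re • L 1 + v.im • L Complex.I := by
    intro v
    rw [← map_smul, ← map_smul, ← map_add]
    congr 1
    simp only [Complex.real_smul, smul_eq_mul, mul_one, Complex.ofReal_mul]
    exact (Complex.re_add_im v).symm
  unfold wderiv
  rw [hcomp.fderiv]
  simp only [ContinuousLinearMap.comp_apply, ContinuousLinearMap.coe_restrictScalars',
    ContinuousLinearMap.smulRight_apply, ContinuousLinearMap.one_apply, one_mul, smul_eq_mul]
  rw [key h', key (Complex.I * h')]
  simp only [Complex.real_smul, smul_eq_mul]
  have h1 : ((Complex.I * h').re : ℂ) = -(h'.im : ℂ) := by simp [Complex.mul_re]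
  have h2 : ((Complex.I * h').im : ℂ) = (h'.re : ℂ) := by simp [Complex.mul_im]
  rw [h1, h2]
  have h3 : (h'.re : ℂ) + (h'.im : ℂ) * Complex.I = h' := Complex.re_add_im h'
  linear_combination ((L 1 - Complex.I * L Complex.I)/2) * h3 + ((h'.im : ℂ) * L Complex.I / 2) * Complex.I_sq

lemma wderiv_const_mul (C : ℂ) {u : ℂ → ℂ} {τ : ℂ} (hu : DifferentiableAt ℝ u τ) :
    wderiv (fun z => C * u z) τ = C * wderiv u τ := by
  unfold wderiv
  rw [fderiv_const_mul hu C]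
  simp [smul_eq_mul]
  ring

lemma wderiv_mul {u v : ℂ → ℂ} {τ : ℂ} (hu : DifferentiableAt ℝ u τ)
    (hv : DifferentiableAt ℝ v τ) :
    wderiv (fun z => u z * v z) τ = wderiv u τ * v τ + u τ * wderiv v τ := by
  unfold wderiv
  rw [fderiv_fun_mul hu hv]
  simp [smul_eq_mul]
  ring

lemma wderiv_fun_sum {ι : Type*} (s : Finset ι) {F : ι → ℂ → ℂ} {τ : ℂ}
    (h : ∀ i ∈ s, DifferentiableAt ℝ (F i) τ) :
    wderiv (fun z => ∑ i ∈ s, F i z) τ = ∑ i ∈ s, wderiv (F i) τ := by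
  unfold wderiv
  rw [fderiv_fun_sum h]
  rw [ContinuousLinearMap.sum_apply, ContinuousLinearMap.sum_apply, Finset.mul_sum,
    ← Finset.sum_sub_distrib, Finset.sum_div]


section SlashDeriv

variable {a b c d : ℂ}

lemma hasDerivAt_affine (τ : ℂ) : HasDerivAt (fun z => c * z + d) c τ := by
  simpa using ((hasDerivAt_id τ).const_mul c).add_const d

lemma hasDerivAt_J_zpow (e : ℤ) (τ : ℂ) (hτ : c * τ + d ≠ 0) :
    HasDerivAt (fun z => (c * z + d) ^ e) ((e : ℂ) * c * (c * τ + d) ^ (e - 1)) τ := by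
  have h1 := (hasDerivAt_zpow e (c * τ + d) (Or.inl hτ)).comp τ (hasDerivAt_affine τ)
  simpa [Function.comp_def, mul_comm, mul_assoc, mul_left_comm] using h1

lemma hasDerivAt_moebius (hdet : a * d - b * c = 1) (τ : ℂ) (hτ : c * τ + d ≠ 0) :
    HasDerivAt (fun z => (a * z + b) / (c * z + d)) ((c * τ + d) ^ (-2 : ℤ)) τ := by
  have h1 := (hasDerivAt_affine (c := a) (d := b) τ).div (hasDerivAt_affine (c := c) (d := d) τ) hτ
  have e1 : (a * (c * τ + d) - (a * τ + b) * c) / (c * τ + d) ^ 2 = (c * τ + d) ^ (-2 : ℤ) := by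
    have : a * (c * τ + d) - (a * τ + b) * c = 1 := by linear_combination hdet
    rw [this, one_div, ← zpow_natCast (c * τ + d) 2, ← zpow_neg]
    norm_num
  rwa [e1] at h1

lemma wderiv_term (C : ℂ) (e : ℤ) {G : ℂ → ℂ} (hG : ContDiff ℝ (⊤ : ℕ∞) G)
    (hdet : a * d - b * c = 1) (τ : ℂ) (hτ : c * τ + d ≠ 0) :
    wderiv (fun z => C * (c * z + d) ^ e * G ((a * z + b) / (c * z + d))) τ
      = C * (e : ℂ) * c * (c * τ + d) ^ (e - 1) * G ((a * τ + b) / (c * τ + d))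
        + C * (c * τ + d) ^ (e - 2) * wderiv G ((a * τ + b) / (c * τ + d)) := by
  have hu : HasDerivAt (fun z => C * (c * z + d) ^ e) (C * ((e : ℂ) * c * (c * τ + d) ^ (e - 1))) τ :=
    (hasDerivAt_J_zpow e τ hτ).const_mul C
  have hudiff : DifferentiableAt ℝ (fun z => C * (c * z + d) ^ e) τ :=
    (hu.differentiableAt).restrictScalars ℝ
  have hM := hasDerivAt_moebius hdet τ hτ
  have hGdiff : DifferentiableAt ℝ G ((a * τ + b) / (c * τ + d)) :=
    (hG.differentiable (by simp)).differentiableAt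
  have hvdiff : DifferentiableAt ℝ (fun z => G ((a * z + b) / (c * z + d))) τ :=
    hGdiff.comp τ ((hM.differentiableAt).restrictScalars ℝ)
  have step := wderiv_mul (u := fun z => C * (c * z + d) ^ e)
    (v := fun z => G ((a * z + b) / (c * z + d))) hudiff hvdiff
  have hwu : wderiv (fun z => C * (c * z + d) ^ e) τ = C * ((e : ℂ) * c * (c * τ + d) ^ (e - 1)) :=
    wderiv_of_hasDerivAt hu
  have hwv : wderiv (fun z => G ((a * z + b) / (c * z + d))) τ
      = wderiv G ((a * τ + b) / (c * τ + d)) * (c * τ + d) ^ (-2 : ℤ) :=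
    wderiv_comp_holo hM hGdiff
  calc wderiv (fun z => C * (c * z + d) ^ e * G ((a * z + b) / (c * z + d))) τ
      = wderiv (fun z => (C * (c * z + d) ^ e) * (G ((a * z + b) / (c * z + d)))) τ := rfl
    _ = _ := by
        rw [step, hwu, hwv]
        have hz : (c * τ + d) ^ e * (c * τ + d) ^ (-2 : ℤ) = (c * τ + d) ^ (e - 2) := by
          rw [← zpow_add₀ hτ]; norm_num; ring_nf
        rw [mul_assoc C ((c * τ + d) ^ e)]
        rw [mul_comm (wderiv G ((a * τ + b) / (c * τ + d))) ((c * τ + d) ^ (-2 : ℤ))]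
        rw [← mul_assoc ((c * τ + d) ^ e)]
        rw [hz]
        ring

end SlashDeriv

section MainDeriv

variable {a b c d : ℂ}

lemma term_differentiable (C : ℂ) (e : ℤ) {G : ℂ → ℂ} (hG : ContDiff ℝ (⊤ : ℕ∞) G)
    (hdet : a * d - b * c = 1) (τ : ℂ) (hτ : c * τ + d ≠ 0) :
    DifferentiableAt ℝ (fun z => C * (c * z + d) ^ e * G ((a * z + b) / (c * z + d))) τ := by
  have hu : HasDerivAt (fun z => C * (c * z + d) ^ e) (C * ((e : ℂ) * c * (c * τ + d) ^ (e - 1))) τ :=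
    (hasDerivAt_J_zpow e τ hτ).const_mul C
  have hudiff : DifferentiableAt ℝ (fun z => C * (c * z + d) ^ e) τ :=
    (hu.differentiableAt).restrictScalars ℝ
  have hM := hasDerivAt_moebius hdet τ hτ
  have hGdiff : DifferentiableAt ℝ G ((a * τ + b) / (c * τ + d)) :=
    (hG.differentiable (by simp)).differentiableAt
  have hvdiff : DifferentiableAt ℝ (fun z => G ((a * z + b) / (c * z + d))) τ :=
    hGdiff.comp τ ((hM.differentiableAt).restrictScalars ℝ)
  exact hudiff.mul hvdiff

lemma sum_shift_combine (r : ℕ) (B P Q : ℕ → ℂ) (h0 : P 0 = B 0) (htop : Q r = B (r+1))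
    (hmid : ∀ i ∈ Finset.range r, P (i+1) + Q i = B (i+1)) :
    (∑ s ∈ Finset.range (r+1), P s) + (∑ s ∈ Finset.range (r+1), Q s)
      = ∑ s ∈ Finset.range (r+2), B s := by
  rw [Finset.sum_range_succ' P r, Finset.sum_range_succ Q r,
      Finset.sum_range_succ B (r+1), Finset.sum_range_succ' B r]
  have hsum : (∑ i ∈ Finset.range r, P (i+1)) + (∑ i ∈ Finset.range r, Q i)
      = ∑ i ∈ Finset.range r, B (i+1) := by
    rw [← Finset.sum_add_distrib]
    exact Finset.sum_congr rfl hmid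
  linear_combination hsum + h0 + htop

lemma slash_deriv (hdet : a * d - b * c = 1) (k : ℤ) {f : ℂ → ℂ} (hf : ContDiff ℝ (⊤ : ℕ∞) f) (r : ℕ) :
    ∀ τ : ℂ, c * τ + d ≠ 0 →
    wderivN r (fun z => (c * z + d) ^ (-k) * f ((a * z + b) / (c * z + d))) τ
      = ∑ s ∈ Finset.range (r+1), Acoef (k : ℂ) r s * c ^ (r - s) * (c * τ + d) ^ (-k - r - s) *
          wderivN s f ((a * τ + b) / (c * τ + d)) := by
  induction r with
  | zero =>
      intro τ hτ
      simp only [wderivN, Finset.sum_range_one, Acoef, Nat.sub_zero, Nat.descFactorial_zero,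
        Nat.cast_zero, Nat.cast_one, pow_zero, gchoose_zero]
      norm_num
      rw [gchoose_zero, show wderivN 0 f = f from rfl]
      ring
  | succ r ih =>
      intro τ hτ
      have hcont : Continuous fun z : ℂ => c * z + d := by continuity
      have hU : IsOpen {z : ℂ | c * z + d ≠ 0} := isOpen_compl_singleton.preimage hcont
      have hev : (wderivN r (fun z => (c * z + d) ^ (-k) * f ((a * z + b) / (c * z + d))))
          =ᶠ[nhds τ] (fun z => ∑ s ∈ Finset.range (r+1),
            (Acoef (k : ℂ) r s * c ^ (r - s)) * (c * z + d) ^ (-k - r - s) *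
              wderivN s f ((a * z + b) / (c * z + d))) := by
        exact Filter.eventuallyEq_of_mem (hU.mem_nhds hτ) (fun z hz => ih z hz)
      have hstep : wderivN (r+1) (fun z => (c * z + d) ^ (-k) * f ((a * z + b) / (c * z + d))) τ
          = wderiv (fun z => ∑ s ∈ Finset.range (r+1),
              (Acoef (k : ℂ) r s * c ^ (r - s)) * (c * z + d) ^ (-k - r - s) *
                wderivN s f ((a * z + b) / (c * z + d))) τ := by
        show wderiv _ τ = _
        exact wderiv_congr_nhds hev
      rw [hstep]
      rw [wderiv_fun_sum _ (fun s _ => term_differentiable _ _ (contDiff_wderivN hf s) hdet τ hτ)]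
      have hterm : ∀ s ∈ Finset.range (r+1),
          wderiv (fun z => (Acoef (k : ℂ) r s * c ^ (r - s)) * (c * z + d) ^ (-k - r - s) *
              wderivN s f ((a * z + b) / (c * z + d))) τ
          = ((Acoef (k : ℂ) r s * c ^ (r - s)) * ((-k - r - s : ℤ) : ℂ) * c *
              (c * τ + d) ^ (-k - r - s - 1) * wderivN s f ((a * τ + b) / (c * τ + d))
            + (Acoef (k : ℂ) r s * c ^ (r - s)) * (c * τ + d) ^ (-k - r - s - 2) *
              wderivN (s+1) f ((a * τ + b) / (c * τ + d))) := by
        intro s _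
        have h := wderiv_term (Acoef (k : ℂ) r s * c ^ (r - s)) (-k - r - s)
          (contDiff_wderivN hf s) hdet τ hτ
        rw [h]; rfl
      rw [Finset.sum_congr rfl hterm, Finset.sum_add_distrib]
      have h0 : (Acoef (k : ℂ) r 0 * c ^ (r - 0)) * ((-k - r - (0:ℕ) : ℤ) : ℂ) * c *
              (c * τ + d) ^ (-k - r - (0:ℕ) - 1) * wderivN 0 f ((a * τ + b) / (c * τ + d))
          = Acoef (k : ℂ) (r+1) 0 * c ^ (r+1-0) *
              (c * τ + d) ^ (-k - (r+1 : ℕ) - (0:ℕ)) * wderivN 0 f ((a * τ + b) / (c * τ + d)) := by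
        rw [A_rec_zero]
        rw [show (-k - (r:ℕ) - (0:ℕ) - 1 : ℤ) = -k - ((r+1 : ℕ) : ℤ) - ((0:ℕ) : ℤ) by push_cast; ring]
        rw [Nat.sub_zero, Nat.sub_zero]
        push_cast
        ring
      have htop : (Acoef (k : ℂ) r r * c ^ (r - r)) *
              (c * τ + d) ^ (-k - r - r - 2) * wderivN (r+1) f ((a * τ + b) / (c * τ + d))
          = Acoef (k : ℂ) (r+1) (r+1) * c ^ (r+1-(r+1)) *
              (c * τ + d) ^ (-k - (r+1 : ℕ) - ((r+1 : ℕ) : ℤ)) * wderivN (r+1) f ((a * τ + b) / (c * τ + d)) := by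
        rw [A_rec_top]
        rw [show (-k - (r:ℕ) - (r:ℕ) - 2 : ℤ) = -k - ((r+1 : ℕ) : ℤ) - ((r+1 : ℕ) : ℤ) by push_cast; ring]
        rw [Nat.sub_self, Nat.sub_self]
      have hmid : ∀ i ∈ Finset.range r,
          ((Acoef (k : ℂ) r (i+1) * c ^ (r - (i+1))) * ((-k - r - (i+1 : ℕ) : ℤ) : ℂ) * c *
              (c * τ + d) ^ (-k - r - (i+1 : ℕ) - 1) * wderivN (i+1) f ((a * τ + b) / (c * τ + d))
            + (Acoef (k : ℂ) r i * c ^ (r - i)) * (c * τ + d) ^ (-k - r - i - 2) *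
              wderivN (i+1) f ((a * τ + b) / (c * τ + d)))
          = Acoef (k : ℂ) (r+1) (i+1) * c ^ (r+1-(i+1)) *
              (c * τ + d) ^ (-k - (r+1 : ℕ) - ((i+1 : ℕ) : ℤ)) *
              wderivN (i+1) f ((a * τ + b) / (c * τ + d)) := by
        intro i hi
        have him : i < r := Finset.mem_range.mp hi
        obtain ⟨m, hm⟩ : ∃ m, r = i + 1 + m := ⟨r - i - 1, by omega⟩
        subst hm
        have d1 : i + 1 + m + 1 - (i + 1) = m + 1 := by omega
        have d2 : i + 1 + m - (i + 1) = m := by omega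
        have d3 : i + 1 + m - i = m + 1 := by omega
        rw [d1, d2, d3]
        rw [show (-k - ((i+1+m : ℕ) : ℤ) - ((i+1 : ℕ) : ℤ) - 1 : ℤ)
              = -k - ((i+1+m+1 : ℕ) : ℤ) - ((i+1 : ℕ) : ℤ) by push_cast; ring]
        rw [show (-k - ((i+1+m : ℕ) : ℤ) - (i : ℤ) - 2 : ℤ)
              = -k - ((i+1+m+1 : ℕ) : ℤ) - ((i+1 : ℕ) : ℤ) by push_cast; ring]
        rw [A_rec_mid (k : ℂ) i m]
        push_cast
        ring
      exact sum_shift_combine r _ _ _ h0 htop hmid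
end MainDeriv

section KeyLemma

lemma A_diag (x : ℂ) (r : ℕ) : Acoef x r r = 1 := by
  simp [Acoef, Nat.sub_self, gchoose_zero]

lemma sum_extend {m n : ℕ} (hmn : m ≤ n) (h : ℕ → ℂ) :
    ∑ i ∈ Finset.range (m+1), h i = ∑ i ∈ Finset.range (n+1), (if i ≤ m then h i else 0) := by
  have e : ∀ i, (if i ≤ m then h i else 0) = (if i ∈ Finset.range (m+1) then h i else 0) := by
    intro i; simp [Finset.mem_range, Nat.lt_succ_iff]
  rw [Finset.sum_congr rfl (fun i _ => e i), Finset.sum_ite_mem]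
  congr 1
  have : Finset.range (n+1) ∩ Finset.range (m+1) = Finset.range (min (n+1) (m+1)) := by
    ext x; simp [Nat.lt_min]
  rw [this, min_eq_right (by omega)]

lemma gr1 (x : ℂ) {n r : ℕ} (h : n ≤ r) :
    gchoose (x + r - 1) n = rpoch (x + (r - n : ℕ)) n / (n.factorial : ℂ) := by
  rw [gchoose_eq_rpoch]
  congr 2
  push_cast [Nat.cast_sub h]
  ring

lemma descFactorial_cast (μ s : ℕ) (hs : s ≤ μ) :
    (μ.descFactorial (μ - s) : ℂ) * (s.factorial : ℂ) = (μ.factorial : ℂ) := by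
  have h := Nat.factorial_mul_descFactorial (Nat.sub_le μ s)
  rw [show μ - (μ - s) = s by omega] at h
  exact_mod_cast (by rw [mul_comm] at h; exact h)

lemma fprod (x : ℂ) {ν μ s : ℕ} (hs : s ≤ μ) (hμ : μ ≤ ν) :
    gchoose (x + ν - 1) (ν - μ) * Acoef x μ s
      = (-1:ℂ)^(μ-s) * rpoch (x + s) (ν - s) * (μ.factorial : ℂ) /
          ((s.factorial : ℂ) * ((ν-μ).factorial : ℂ) * ((μ-s).factorial : ℂ)) := by
  have h1 : gchoose (x + ν - 1) (ν - μ) = rpoch (x + (μ : ℕ)) (ν - μ) / (((ν-μ).factorial : ℂ)) := by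
    rw [gr1 x (Nat.sub_le ν μ), show ν - (ν - μ) = μ by omega]
  have h2 : gchoose (x + μ - 1) (μ - s) = rpoch (x + (s : ℕ)) (μ - s) / (((μ-s).factorial : ℂ)) := by
    rw [gr1 x (Nat.sub_le μ s), show μ - (μ - s) = s by omega]
  have h3 : rpoch (x + s) (μ - s) * rpoch (x + (μ:ℕ)) (ν - μ) = rpoch (x + s) (ν - s) := by
    rw [show (ν : ℕ) - s = (μ - s) + (ν - μ) by omega, rpoch_add]
    congr 2
    push_cast [Nat.cast_sub hs]
    ring
  have h4 := descFactorial_cast μ s hs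
  have hfs : ((s.factorial : ℂ)) ≠ 0 := Nat.cast_ne_zero.mpr (Nat.factorial_ne_zero s)
  have hf1 : (((ν-μ).factorial : ℂ)) ≠ 0 := Nat.cast_ne_zero.mpr (Nat.factorial_ne_zero _)
  have hf2 : (((μ-s).factorial : ℂ)) ≠ 0 := Nat.cast_ne_zero.mpr (Nat.factorial_ne_zero _)
  have hD : (μ.descFactorial (μ-s) : ℂ) = (μ.factorial : ℂ) / (s.factorial : ℂ) := by
    rw [eq_div_iff hfs]; exact h4
  rw [Acoef, h1, h2, hD, ← h3]
  field_simp

lemma gprod (x : ℂ) {ν μ t : ℕ} (ht : t ≤ ν - μ) (hμ : μ ≤ ν) :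
    gchoose (x + ν - 1) μ * Acoef x (ν-μ) t
      = (-1:ℂ)^(ν-μ-t) * rpoch (x + t) (ν - t) * (((ν-μ).factorial : ℂ)) /
          ((t.factorial : ℂ) * (μ.factorial : ℂ) * ((ν-μ-t).factorial : ℂ)) := by
  have h1 : gchoose (x + ν - 1) μ = rpoch (x + ((ν - μ : ℕ))) μ / ((μ.factorial : ℂ)) := by
    rw [gr1 x (by omega : μ ≤ ν)]
  have h2 : gchoose (x + (ν - μ : ℕ) - 1) (ν - μ - t) = rpoch (x + (t : ℕ)) (ν - μ - t) / (((ν-μ-t).factorial : ℂ)) := by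
    rw [gr1 x (Nat.sub_le (ν - μ) t), show (ν - μ) - ((ν - μ) - t) = t by omega]
  have h3 : rpoch (x + t) (ν - μ - t) * rpoch (x + ((ν - μ : ℕ))) μ = rpoch (x + t) (ν - t) := by
    rw [show (ν : ℕ) - t = (ν - μ - t) + μ by omega, rpoch_add]
    congr 2
    push_cast [Nat.cast_sub ht]
    ring
  have h4 := descFactorial_cast (ν - μ) t ht
  have hfs : ((t.factorial : ℂ)) ≠ 0 := Nat.cast_ne_zero.mpr (Nat.factorial_ne_zero t)
  have hf1 : ((μ.factorial : ℂ)) ≠ 0 := Nat.cast_ne_zero.mpr (Nat.factorial_ne_zero _)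
  have hf2 : (((ν-μ-t).factorial : ℂ)) ≠ 0 := Nat.cast_ne_zero.mpr (Nat.factorial_ne_zero _)
  have hD : ((ν-μ).descFactorial (ν-μ-t) : ℂ) = ((ν-μ).factorial : ℂ) / (t.factorial : ℂ) := by
    rw [eq_div_iff hfs]; exact h4
  rw [Acoef, h1, h2, hD, ← h3]
  field_simp

end KeyLemma

section Vanish

lemma alt_sum_choose_complex {n : ℕ} (hn : n ≠ 0) :
    ∑ i ∈ Finset.range (n+1), ((-1:ℂ)^i * (n.choose i : ℂ)) = 0 := by
  have h := Int.alternating_sum_range_choose (n := n)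
  rw [if_neg hn] at h
  have e : (∑ i ∈ Finset.range (n+1), ((-1:ℂ)^i * (n.choose i : ℂ)))
      = ((∑ i ∈ Finset.range (n+1), ((-1:ℤ)^i * (n.choose i : ℤ)) : ℤ) : ℂ) := by
    push_cast; rfl
  rw [e, h]; simp

lemma choose_cast_div (i m : ℕ) :
    (((i+m).choose i : ℂ)) = ((i+m).factorial : ℂ) / ((i.factorial : ℂ) * (m.factorial : ℂ)) := by
  have hi : ((i.factorial : ℂ)) ≠ 0 := Nat.cast_ne_zero.mpr (Nat.factorial_ne_zero _)
  have hm : ((m.factorial : ℂ)) ≠ 0 := Nat.cast_ne_zero.mpr (Nat.factorial_ne_zero _)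
  rw [eq_div_iff (by exact mul_ne_zero hi hm)]
  have := Nat.choose_mul_factorial_mul_factorial (Nat.le_add_right i m)
  rw [show i + m - i = m by omega] at this
  exact_mod_cast (by push_cast [← this]; ring)

lemma scalar_vanish (k l : ℂ) {ν s t : ℕ} (hst : s + t < ν) :
    ∑ μ ∈ Finset.range (ν+1), (if s ≤ μ ∧ μ + t ≤ ν then
      (-1:ℂ)^μ * gchoose (k + ν - 1) (ν - μ) * gchoose (l + ν - 1) μ *
        Acoef k μ s * Acoef l (ν-μ) t else 0) = 0 := by
  have hfil : (Finset.range (ν+1)).filter (fun μ => s ≤ μ ∧ μ + t ≤ ν) = Finset.Ico s (ν-t+1) := by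
    ext μ
    simp only [Finset.mem_filter, Finset.mem_range, Finset.mem_Ico]
    omega
  rw [← Finset.sum_filter, hfil, Finset.sum_Ico_eq_sum_range]
  rw [show ν - t + 1 - s = (ν - s - t) + 1 by omega]
  set n := ν - s - t with hn
  have hperi : ∀ i ∈ Finset.range (n+1),
      (-1:ℂ)^(s+i) * gchoose (k + ν - 1) (ν - (s+i)) * gchoose (l + ν - 1) (s+i) *
        Acoef k (s+i) s * Acoef l (ν-(s+i)) t
      = ((-1:ℂ)^(s+n) * rpoch (k + s) (ν - s) * rpoch (l + t) (ν - t) /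
          ((s.factorial : ℂ) * (t.factorial : ℂ) * (n.factorial : ℂ))) *
        ((-1:ℂ)^i * (n.choose i : ℂ)) := by
    intro i hi
    have hin : i ≤ n := Nat.lt_succ_iff.mp (Finset.mem_range.mp hi)
    obtain ⟨m, hm⟩ : ∃ m, n = i + m := ⟨n - i, by omega⟩
    have hf := fprod k (s := s) (μ := s + i) (ν := ν) (by omega) (by omega)
    have hg := gprod l (t := t) (μ := s + i) (ν := ν) (by omega) (by omega)
    calc (-1:ℂ)^(s+i) * gchoose (k + ν - 1) (ν - (s+i)) * gchoose (l + ν - 1) (s+i) *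
        Acoef k (s+i) s * Acoef l (ν-(s+i)) t
        = (-1:ℂ)^(s+i) * (gchoose (k + ν - 1) (ν - (s+i)) * Acoef k (s+i) s) *
          (gchoose (l + ν - 1) (s+i) * Acoef l (ν-(s+i)) t) := by ring
      _ = _ := by
          rw [hf, hg]
          rw [show s + i - s = i by omega, show ν - (s+i) - t = m by omega,
            show ν - (s + i) = m + t by omega]
          rw [hm, choose_cast_div i m]
          have h1 : ((s.factorial : ℂ)) ≠ 0 := Nat.cast_ne_zero.mpr (Nat.factorial_ne_zero _)
          have h2 : ((t.factorial : ℂ)) ≠ 0 := Nat.cast_ne_zero.mpr (Nat.factorial_ne_zero _)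
          have h3 : ((i.factorial : ℂ)) ≠ 0 := Nat.cast_ne_zero.mpr (Nat.factorial_ne_zero _)
          have h4 : ((m.factorial : ℂ)) ≠ 0 := Nat.cast_ne_zero.mpr (Nat.factorial_ne_zero _)
          have h5 : (((i+m).factorial : ℂ)) ≠ 0 := Nat.cast_ne_zero.mpr (Nat.factorial_ne_zero _)
          have h6 : (((s+i).factorial : ℂ)) ≠ 0 := Nat.cast_ne_zero.mpr (Nat.factorial_ne_zero _)
          have h7 : (((m+t).factorial : ℂ)) ≠ 0 := Nat.cast_ne_zero.mpr (Nat.factorial_ne_zero _)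
          field_simp
          ring
  rw [Finset.sum_congr rfl hperi, ← Finset.mul_sum]
  rw [alt_sum_choose_complex (by omega)]
  ring
end Vanish

section Key

lemma key (k l : ℤ) (ν : ℕ) (c j : ℂ) (hj : j ≠ 0) (F G : ℕ → ℂ) :
    ∑ μ ∈ Finset.range (ν+1), ((-1:ℂ)^μ * gchoose ((k:ℂ) + ν - 1) (ν - μ) * gchoose ((l:ℂ) + ν - 1) μ *
      (∑ s ∈ Finset.range (μ+1), Acoef (k:ℂ) μ s * c^(μ-s) * j^(-k - μ - s) * F s) *
      (∑ t ∈ Finset.range ((ν-μ)+1), Acoef (l:ℂ) (ν-μ) t * c^((ν-μ)-t) * j^(-l - ((ν-μ) : ℕ) - t) * G t))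
    = j^(-(k + l + 2*(ν:ℤ))) * ∑ μ ∈ Finset.range (ν+1), (-1:ℂ)^μ * gchoose ((k:ℂ) + ν - 1) (ν - μ) *
        gchoose ((l:ℂ) + ν - 1) μ * F μ * G (ν-μ) := by
  have stepA : ∀ μ ∈ Finset.range (ν+1),
      (-1:ℂ)^μ * gchoose ((k:ℂ) + ν - 1) (ν - μ) * gchoose ((l:ℂ) + ν - 1) μ *
      (∑ s ∈ Finset.range (μ+1), Acoef (k:ℂ) μ s * c^(μ-s) * j^(-k - μ - s) * F s) *
      (∑ t ∈ Finset.range ((ν-μ)+1), Acoef (l:ℂ) (ν-μ) t * c^((ν-μ)-t) * j^(-l - ((ν-μ) : ℕ) - t) * G t)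
      = ∑ s ∈ Finset.range (ν+1), ∑ t ∈ Finset.range (ν+1),
          (if s ≤ μ ∧ μ + t ≤ ν then
            (-1:ℂ)^μ * gchoose ((k:ℂ) + ν - 1) (ν - μ) * gchoose ((l:ℂ) + ν - 1) μ *
            (Acoef (k:ℂ) μ s * c^(μ-s) * j^(-k - μ - s) * F s) *
            (Acoef (l:ℂ) (ν-μ) t * c^((ν-μ)-t) * j^(-l - ((ν-μ) : ℕ) - t) * G t)
          else 0) := by
    intro μ hμ
    have hμν : μ ≤ ν := Nat.lt_succ_iff.mp (Finset.mem_range.mp hμ)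
    rw [sum_extend hμν (fun s => Acoef (k:ℂ) μ s * c^(μ-s) * j^(-k - μ - s) * F s)]
    rw [sum_extend (Nat.sub_le ν μ) (fun t => Acoef (l:ℂ) (ν-μ) t * c^((ν-μ)-t) * j^(-l - ((ν-μ) : ℕ) - t) * G t)]
    rw [show ((-1:ℂ)^μ * gchoose ((k:ℂ) + ν - 1) (ν - μ) * gchoose ((l:ℂ) + ν - 1) μ *
        (∑ s ∈ Finset.range (ν+1), (if s ≤ μ then Acoef (k:ℂ) μ s * c^(μ-s) * j^(-k - μ - s) * F s else 0)) *
        (∑ t ∈ Finset.range (ν+1), (if t ≤ ν - μ then Acoef (l:ℂ) (ν-μ) t * c^((ν-μ)-t) * j^(-l - ((ν-μ) : ℕ) - t) * G t else 0)))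
        = ∑ s ∈ Finset.range (ν+1), ∑ t ∈ Finset.range (ν+1),
            ((-1:ℂ)^μ * gchoose ((k:ℂ) + ν - 1) (ν - μ) * gchoose ((l:ℂ) + ν - 1) μ) *
            ((if s ≤ μ then Acoef (k:ℂ) μ s * c^(μ-s) * j^(-k - μ - s) * F s else 0) *
             (if t ≤ ν - μ then Acoef (l:ℂ) (ν-μ) t * c^((ν-μ)-t) * j^(-l - ((ν-μ) : ℕ) - t) * G t else 0))
      from by
        rw [mul_assoc, Finset.sum_mul_sum, Finset.mul_sum]
        refine Finset.sum_congr rfl fun s _ => ?_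
        rw [Finset.mul_sum]]
    refine Finset.sum_congr rfl fun s _ => ?_
    refine Finset.sum_congr rfl fun t _ => ?_
    by_cases hs : s ≤ μ
    · by_cases ht : t ≤ ν - μ
      · rw [if_pos hs, if_pos ht, if_pos (show s ≤ μ ∧ μ + t ≤ ν from ⟨hs, by omega⟩)]
        ring
      · have hng : ¬(s ≤ μ ∧ μ + t ≤ ν) := by omega
        rw [if_pos hs, if_neg ht, if_neg hng]
        simp
    · have hng : ¬(s ≤ μ ∧ μ + t ≤ ν) := fun h => hs h.1
      rw [if_neg hs, if_neg hng]
      simp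
  rw [Finset.sum_congr rfl stepA]
  rw [Finset.sum_comm]
  have swap2 : ∀ s ∈ Finset.range (ν+1),
      (∑ μ ∈ Finset.range (ν+1), ∑ t ∈ Finset.range (ν+1),
        (if s ≤ μ ∧ μ + t ≤ ν then
          (-1:ℂ)^μ * gchoose ((k:ℂ) + ν - 1) (ν - μ) * gchoose ((l:ℂ) + ν - 1) μ *
          (Acoef (k:ℂ) μ s * c^(μ-s) * j^(-k - μ - s) * F s) *
          (Acoef (l:ℂ) (ν-μ) t * c^((ν-μ)-t) * j^(-l - ((ν-μ) : ℕ) - t) * G t)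
        else 0))
      = ∑ t ∈ Finset.range (ν+1), ∑ μ ∈ Finset.range (ν+1),
        (if s ≤ μ ∧ μ + t ≤ ν then
          (-1:ℂ)^μ * gchoose ((k:ℂ) + ν - 1) (ν - μ) * gchoose ((l:ℂ) + ν - 1) μ *
          (Acoef (k:ℂ) μ s * c^(μ-s) * j^(-k - μ - s) * F s) *
          (Acoef (l:ℂ) (ν-μ) t * c^((ν-μ)-t) * j^(-l - ((ν-μ) : ℕ) - t) * G t)
        else 0) := fun s _ => Finset.sum_comm
  rw [Finset.sum_congr rfl swap2]
  have hinner : ∀ s ∈ Finset.range (ν+1), ∀ t ∈ Finset.range (ν+1),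
      (∑ μ ∈ Finset.range (ν+1),
        (if s ≤ μ ∧ μ + t ≤ ν then
          (-1:ℂ)^μ * gchoose ((k:ℂ) + ν - 1) (ν - μ) * gchoose ((l:ℂ) + ν - 1) μ *
          (Acoef (k:ℂ) μ s * c^(μ-s) * j^(-k - μ - s) * F s) *
          (Acoef (l:ℂ) (ν-μ) t * c^((ν-μ)-t) * j^(-l - ((ν-μ) : ℕ) - t) * G t)
        else 0))
      = (if s + t = ν then
          j^(-(k + l + 2*(ν:ℤ))) * ((-1:ℂ)^s * gchoose ((k:ℂ) + ν - 1) (ν - s) *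
            gchoose ((l:ℂ) + ν - 1) s * F s * G t)
        else 0) := by
    intro s hs t ht
    have hsν : s ≤ ν := Nat.lt_succ_iff.mp (Finset.mem_range.mp hs)
    have htν : t ≤ ν := Nat.lt_succ_iff.mp (Finset.mem_range.mp ht)
    rcases lt_trichotomy (s + t) ν with hlt | heq | hgt
    · rw [if_neg (by omega)]
      have hz : ∀ μ ∈ Finset.range (ν+1),
          (if s ≤ μ ∧ μ + t ≤ ν then
            (-1:ℂ)^μ * gchoose ((k:ℂ) + ν - 1) (ν - μ) * gchoose ((l:ℂ) + ν - 1) μ *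
            (Acoef (k:ℂ) μ s * c^(μ-s) * j^(-k - μ - s) * F s) *
            (Acoef (l:ℂ) (ν-μ) t * c^((ν-μ)-t) * j^(-l - ((ν-μ) : ℕ) - t) * G t)
          else 0)
          = (c^(ν-s-t) * j^(-k - l - ν - s - t) * F s * G t) *
            (if s ≤ μ ∧ μ + t ≤ ν then
              (-1:ℂ)^μ * gchoose ((k:ℂ) + ν - 1) (ν - μ) * gchoose ((l:ℂ) + ν - 1) μ *
                Acoef (k:ℂ) μ s * Acoef (l:ℂ) (ν-μ) t else 0) := by
        intro μ hμ
        have hμν : μ ≤ ν := Nat.lt_succ_iff.mp (Finset.mem_range.mp hμ)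
        by_cases hg : s ≤ μ ∧ μ + t ≤ ν
        · rw [if_pos hg, if_pos hg]
          have hc : c^(μ-s) * c^((ν-μ)-t) = c^(ν-s-t) := by
            rw [← pow_add]
            congr 1
            omega
          have hjj : j^(-k - μ - s) * j^(-l - ((ν-μ) : ℕ) - t) = j^(-k - l - ν - s - t) := by
            rw [← zpow_add₀ hj]
            congr 1
            have : ((ν - μ : ℕ) : ℤ) = (ν : ℤ) - μ := by
              push_cast [Nat.cast_sub hμν]; ring
            rw [this]; ring
          calc (-1:ℂ)^μ * gchoose ((k:ℂ) + ν - 1) (ν - μ) * gchoose ((l:ℂ) + ν - 1) μ *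
            (Acoef (k:ℂ) μ s * c^(μ-s) * j^(-k - μ - s) * F s) *
            (Acoef (l:ℂ) (ν-μ) t * c^((ν-μ)-t) * j^(-l - ((ν-μ) : ℕ) - t) * G t)
              = (c^(μ-s) * c^((ν-μ)-t)) * (j^(-k - μ - s) * j^(-l - ((ν-μ) : ℕ) - t)) * F s * G t *
                ((-1:ℂ)^μ * gchoose ((k:ℂ) + ν - 1) (ν - μ) * gchoose ((l:ℂ) + ν - 1) μ *
                  Acoef (k:ℂ) μ s * Acoef (l:ℂ) (ν-μ) t) := by ring
            _ = _ := by rw [hc, hjj]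
        · rw [if_neg hg, if_neg hg, mul_zero]
      rw [Finset.sum_congr rfl hz, ← Finset.mul_sum, scalar_vanish (k:ℂ) (l:ℂ) hlt, mul_zero]
    · rw [if_pos heq]
      rw [Finset.sum_eq_single s]
      · rw [if_pos ⟨le_refl s, by omega⟩]
        rw [show ν - s = t by omega]
        rw [A_diag, A_diag, Nat.sub_self, Nat.sub_self]

        have hjj : j^(-k - s - s) * j^(-l - (t : ℕ) - t) = j^(-(k + l + 2*(ν:ℤ))) := by
          rw [← zpow_add₀ hj]
          congr 1
          omega
        calc (-1:ℂ)^s * gchoose ((k:ℂ) + ν - 1) t * gchoose ((l:ℂ) + ν - 1) s *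
            (1 * c^0 * j^(-k - s - s) * F s) * (1 * c^0 * j^(-l - (t:ℕ) - t) * G t)
            = (j^(-k - s - s) * j^(-l - (t:ℕ) - t)) * ((-1:ℂ)^s * gchoose ((k:ℂ) + ν - 1) t *
              gchoose ((l:ℂ) + ν - 1) s * F s * G t) := by ring
          _ = _ := by rw [hjj]
      · intro μ hμ hne
        have hng : ¬(s ≤ μ ∧ μ + t ≤ ν) := by omega
        rw [if_neg hng]
      · intro habs
        exact absurd (Finset.mem_range.mpr (by omega)) habs
    · rw [if_neg (show ¬(s + t = ν) by omega)]
      refine Finset.sum_eq_zero fun μ hμ => ?_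
      have hng : ¬(s ≤ μ ∧ μ + t ≤ ν) := by omega
      rw [if_neg hng]
  rw [Finset.sum_congr rfl (fun s hs => Finset.sum_congr rfl (fun t ht => hinner s hs t ht))]
  have houter : ∀ s ∈ Finset.range (ν+1),
      (∑ t ∈ Finset.range (ν+1), (if s + t = ν then
          j^(-(k + l + 2*(ν:ℤ))) * ((-1:ℂ)^s * gchoose ((k:ℂ) + ν - 1) (ν - s) *
            gchoose ((l:ℂ) + ν - 1) s * F s * G t)
        else 0))
      = j^(-(k + l + 2*(ν:ℤ))) * ((-1:ℂ)^s * gchoose ((k:ℂ) + ν - 1) (ν - s) *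
            gchoose ((l:ℂ) + ν - 1) s * F s * G (ν - s)) := by
    intro s hs
    have hsν : s ≤ ν := Nat.lt_succ_iff.mp (Finset.mem_range.mp hs)
    rw [Finset.sum_eq_single (ν - s)]
    · rw [if_pos (show s + (ν - s) = ν by omega)]
    · intro t ht hne
      have hng : ¬(s + t = ν) := by omega
      rw [if_neg hng]
    · intro habs
      exact absurd (Finset.mem_range.mpr (by omega)) habs
  rw [Finset.sum_congr rfl houter, ← Finset.mul_sum]

end Key

end Aux

/-- the Rankin-Cohen bracket commutes with the slash action:
`[(f|_k γ), (g|_ℓ γ)]_ν = ([f,g]_ν)|_{k+ℓ+2ν} γ` for all `γ ∈ SL₂(ℝ)`. -/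
theorem RC_slash (k l : ℤ) (ν : ℕ) (f g : ℂ → ℂ)
    (hf : ContDiff ℝ (⊤ : ℕ∞) f) (hg : ContDiff ℝ (⊤ : ℕ∞) g)
    (γ : Matrix.SpecialLinearGroup (Fin 2) ℝ) (τ : ℂ) (hτ : 0 < τ.im) :
    RC (k : ℂ) (l : ℂ) ν (slash k γ f) (slash l γ g) τ =
      slash (k + l + 2 * ν) γ (RC (k : ℂ) (l : ℂ) ν f g) τ := by
  have hdetR : (γ.1 0 0 : ℝ) * γ.1 1 1 - γ.1 0 1 * γ.1 1 0 = 1 := by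
    have h := γ.2
    rw [Matrix.det_fin_two] at h
    exact h
  have hdet : ((γ.1 0 0 : ℝ) : ℂ) * ((γ.1 1 1 : ℝ) : ℂ) - ((γ.1 0 1 : ℝ) : ℂ) * ((γ.1 1 0 : ℝ) : ℂ) = 1 := by
    exact_mod_cast hdetR
  have hJ : ((γ.1 1 0 : ℝ) : ℂ) * τ + ((γ.1 1 1 : ℝ) : ℂ) ≠ 0 := by
    by_cases hc0 : (γ.1 1 0 : ℝ) = 0
    · have hd : (γ.1 1 1 : ℝ) ≠ 0 := by
        intro h0; rw [hc0, h0] at hdetR; simp at hdetR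
      rw [hc0]
      simpa using Complex.ofReal_ne_zero.mpr hd
    · intro h0
      have him : (γ.1 1 0 : ℝ) * τ.im = 0 := by
        have h1 := congrArg Complex.im h0
        simpa [Complex.add_im, Complex.mul_im] using h1
      rcases mul_eq_zero.mp him with h | h
      · exact hc0 h
      · exact absurd h (ne_of_gt hτ)
  have hw1 : ∀ μ : ℕ, wderivN μ (fun z => (((γ.1 1 0 : ℝ) : ℂ) * z + ((γ.1 1 1 : ℝ) : ℂ)) ^ (-k) *
      f ((((γ.1 0 0 : ℝ) : ℂ) * z + ((γ.1 0 1 : ℝ) : ℂ)) /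
        (((γ.1 1 0 : ℝ) : ℂ) * z + ((γ.1 1 1 : ℝ) : ℂ)))) τ
      = ∑ s ∈ Finset.range (μ+1), Acoef (k : ℂ) μ s * ((γ.1 1 0 : ℝ) : ℂ) ^ (μ - s) *
          (((γ.1 1 0 : ℝ) : ℂ) * τ + ((γ.1 1 1 : ℝ) : ℂ)) ^ (-k - μ - s) *
          wderivN s f ((((γ.1 0 0 : ℝ) : ℂ) * τ + ((γ.1 0 1 : ℝ) : ℂ)) /
            (((γ.1 1 0 : ℝ) : ℂ) * τ + ((γ.1 1 1 : ℝ) : ℂ))) := by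
    intro μ
    exact slash_deriv hdet k hf μ τ hJ
  have hw2 : ∀ μ : ℕ, wderivN μ (fun z => (((γ.1 1 0 : ℝ) : ℂ) * z + ((γ.1 1 1 : ℝ) : ℂ)) ^ (-l) *
      g ((((γ.1 0 0 : ℝ) : ℂ) * z + ((γ.1 0 1 : ℝ) : ℂ)) /
        (((γ.1 1 0 : ℝ) : ℂ) * z + ((γ.1 1 1 : ℝ) : ℂ)))) τ
      = ∑ s ∈ Finset.range (μ+1), Acoef (l : ℂ) μ s * ((γ.1 1 0 : ℝ) : ℂ) ^ (μ - s) *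
          (((γ.1 1 0 : ℝ) : ℂ) * τ + ((γ.1 1 1 : ℝ) : ℂ)) ^ (-l - μ - s) *
          wderivN s g ((((γ.1 0 0 : ℝ) : ℂ) * τ + ((γ.1 0 1 : ℝ) : ℂ)) /
            (((γ.1 1 0 : ℝ) : ℂ) * τ + ((γ.1 1 1 : ℝ) : ℂ))) := by
    intro μ
    exact slash_deriv hdet l hg μ τ hJ
  unfold RC slash
  rw [Finset.sum_congr rfl (fun μ _ => by rw [hw1 μ, hw2 (ν - μ)])]
  rw [key k l ν _ _ hJ
    (fun s => wderivN s f ((((γ.1 0 0 : ℝ) : ℂ) * τ + ((γ.1 0 1 : ℝ) : ℂ)) /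
      (((γ.1 1 0 : ℝ) : ℂ) * τ + ((γ.1 1 1 : ℝ) : ℂ))))
    (fun t => wderivN t g ((((γ.1 0 0 : ℝ) : ℂ) * τ + ((γ.1 0 1 : ℝ) : ℂ)) /
      (((γ.1 1 0 : ℝ) : ℂ) * τ + ((γ.1 1 1 : ℝ) : ℂ))))]
  push_cast
  ring
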